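/- For a piecewise affine generator g(z) = Σ_ω 1_{z∈ω}(A_ω z + b_ω) with Gaussian prior z ~ N(0, Σz) and Gaussian noise model p(x|z) = φ(x; g(z), Σx), the marginal density satisfies p(x) = Σ_{ω∈Ω} φ(x; b_ω, Σx + A_ω Σz A_ω^T) · ∫_ω φ(z; μ_ω(x), Σ_ω) dz, where Σ_ω = (Σz^{-1} + A_ω^T Σx^{-1} A_ω)^{-1} and μ_ω(x) = Σ_ω A_ω^T Σx^{-1}(x - b_ω). -/

import Mathlib

/-
On each region the generator is affine, so the integrand is a product of two Gaussian
exponentials whose exponent is a quadratic in `z`. Completing the square (Woodbury identity for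
the constant term, matrix determinant lemma for the normalisations) rewrites it as the Gaussian
density of `x` with covariance `Σx + A Σz Aᵀ` times the Gaussian density of `z` with precision
`Σz⁻¹ + Aᵀ Σx⁻¹ A`. Splitting the integral over the finite partition gives the sum.
-/

open Matrix MeasureTheory

/-- Multivariate Gaussian density with mean `m` and covariance `S`, evaluated at `x`. -/
noncomputable def gaussD {ι : Type} [Fintype ι] [DecidableEq ι]
    (S : Matrix ι ι ℝ) (m x : ι → ℝ) : ℝ :=
  (Real.sqrt ((2 * Real.pi) ^ (Fintype.card ι) * S.det))⁻¹ *
    Real.exp (-(1 / 2) * ((x - m) ⬝ᵥ (S⁻¹ *ᵥ (x - m))))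

namespace Matrix

lemma PosDef.isSymm {n : Type*} {M : Matrix n n ℝ} (hM : M.PosDef) : M.IsSymm :=
  isHermitian_iff_isSymm.mp hM.isHermitian

variable {m n : Type*} [Fintype m] [Fintype n]

lemma IsSymm.dotProduct_mulVec_comm {M : Matrix n n ℝ} (hM : M.IsSymm) (v w : n → ℝ) :
    v ⬝ᵥ M *ᵥ w = w ⬝ᵥ M *ᵥ v := by
  rw [← dotProduct_transpose_mulVec, hM.eq]

lemma sub_mulVec_dotProduct_mulVec_sub {M : Matrix m m ℝ} (hM : M.IsSymm) (A : Matrix m n ℝ)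
    (y : m → ℝ) (z : n → ℝ) :
    (y - A *ᵥ z) ⬝ᵥ M *ᵥ (y - A *ᵥ z)
      = y ⬝ᵥ M *ᵥ y - 2 * (z ⬝ᵥ Aᵀ *ᵥ M *ᵥ y) + z ⬝ᵥ (Aᵀ * M * A) *ᵥ z := by
  have hcross : (A *ᵥ z) ⬝ᵥ M *ᵥ y = z ⬝ᵥ Aᵀ *ᵥ M *ᵥ y := by
    rw [dotProduct_transpose_mulVec, dotProduct_comm]
  have hquad : (A *ᵥ z) ⬝ᵥ M *ᵥ A *ᵥ z = z ⬝ᵥ (Aᵀ * M * A) *ᵥ z := by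
    rw [← mulVec_mulVec, ← mulVec_mulVec, dotProduct_transpose_mulVec, dotProduct_comm]
  simp only [mulVec_sub, dotProduct_sub, sub_dotProduct]
  rw [hM.dotProduct_mulVec_comm y (A *ᵥ z), hcross, hquad]
  ring

lemma PosDef.add_mul_mul_transpose {Sx : Matrix m m ℝ} {Sz : Matrix n n ℝ}
    (hSx : Sx.PosDef) (hSz : Sz.PosSemidef) (A : Matrix m n ℝ) :
    (Sx + A * Sz * Aᵀ).PosDef :=
  hSx.add_posSemidef (by simpa using hSz.mul_mul_conjTranspose_same A)

variable [DecidableEq m] [DecidableEq n]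

lemma PosDef.inv_add_transpose_mul_inv_mul {Sx : Matrix m m ℝ} {Sz : Matrix n n ℝ}
    (hSz : Sz.PosDef) (hSx : Sx.PosSemidef) (A : Matrix m n ℝ) :
    (Sz⁻¹ + Aᵀ * Sx⁻¹ * A).PosDef :=
  hSz.inv.add_posSemidef (by simpa using hSx.inv.conjTranspose_mul_mul_same A)

lemma sub_inv_mulVec_dotProduct_mulVec_sub {P : Matrix n n ℝ} (hP : P.IsSymm)
    (hdet : IsUnit P.det) (z t : n → ℝ) :
    (z - P⁻¹ *ᵥ t) ⬝ᵥ P *ᵥ (z - P⁻¹ *ᵥ t) = z ⬝ᵥ P *ᵥ z - 2 * (z ⬝ᵥ t) + t ⬝ᵥ P⁻¹ *ᵥ t := by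
  have hcancel : P *ᵥ P⁻¹ *ᵥ t = t := by
    rw [mulVec_mulVec, mul_nonsing_inv _ hdet, one_mulVec]
  simp only [mulVec_sub, dotProduct_sub, sub_dotProduct, hcancel]
  rw [hP.dotProduct_mulVec_comm (P⁻¹ *ᵥ t) z, hcancel, dotProduct_comm (P⁻¹ *ᵥ t) t]
  ring

/-- Quadratic form of the Woodbury identity. -/
lemma dotProduct_inv_add_mul_mul_transpose_mulVec {Sx : Matrix m m ℝ} {Sz : Matrix n n ℝ}
    (hSx : Sx.IsSymm) (hx : IsUnit Sx) (hz : IsUnit Sz) (A : Matrix m n ℝ)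
    (hP : IsUnit (Sz⁻¹ + Aᵀ * Sx⁻¹ * A)) (y : m → ℝ) :
    y ⬝ᵥ (Sx + A * Sz * Aᵀ)⁻¹ *ᵥ y
      = y ⬝ᵥ Sx⁻¹ *ᵥ y - (Aᵀ *ᵥ Sx⁻¹ *ᵥ y) ⬝ᵥ (Sz⁻¹ + Aᵀ * Sx⁻¹ * A)⁻¹ *ᵥ Aᵀ *ᵥ Sx⁻¹ *ᵥ y := by
  rw [add_mul_mul_inv_eq_sub _ _ _ _ hx hz hP, sub_mulVec, dotProduct_sub]
  congr 1
  simp only [← mulVec_mulVec]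
  set w := (Sz⁻¹ + Aᵀ * Sx⁻¹ * A)⁻¹ *ᵥ Aᵀ *ᵥ Sx⁻¹ *ᵥ y
  rw [hSx.inv.dotProduct_mulVec_comm, dotProduct_comm (A *ᵥ w), ← dotProduct_transpose_mulVec,
    dotProduct_comm]

lemma det_add_mul_mul_transpose {Sx : Matrix m m ℝ} {Sz : Matrix n n ℝ}
    (hx : IsUnit Sx.det) (hz : IsUnit Sz.det) (A : Matrix m n ℝ) :
    (Sx + A * Sz * Aᵀ).det = Sx.det * Sz.det * (Sz⁻¹ + Aᵀ * Sx⁻¹ * A).det := by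
  have hfactor : Sx + A * Sz * Aᵀ = Sx * (1 + (Sx⁻¹ * A) * (Sz * Aᵀ)) := by
    simp only [mul_add, mul_one, ← Matrix.mul_assoc, mul_nonsing_inv _ hx, Matrix.one_mul]
  have hfactor' : 1 + Sz * Aᵀ * (Sx⁻¹ * A) = Sz * (Sz⁻¹ + Aᵀ * Sx⁻¹ * A) := by
    rw [mul_add, mul_nonsing_inv _ hz, Matrix.mul_assoc, Matrix.mul_assoc]
  rw [hfactor, det_mul, det_one_add_mul_comm, hfactor', det_mul]
  ring

end Matrix

lemma exists_pos_mul_norm_sq_le_of_homogeneous {E : Type*} [NormedAddCommGroup E]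
    [NormedSpace ℝ E] [FiniteDimensional ℝ E] {q : E → ℝ} (hq : Continuous q)
    (hsmul : ∀ (t : ℝ) z, q (t • z) = t ^ 2 * q z) (hpos : ∀ z ≠ 0, 0 < q z) :
    ∃ c > 0, ∀ z, c * ‖z‖ ^ 2 ≤ q z := by
  have hzero : q 0 = 0 := by simpa using hsmul 0 0
  rcases subsingleton_or_nontrivial E with hE | hE
  · exact ⟨1, one_pos, fun z => by simp [Subsingleton.elim z 0, hzero]⟩
  obtain ⟨z₀, hz₀, hmin⟩ := (isCompact_sphere (0 : E) 1).exists_isMinOn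
    (NormedSpace.sphere_nonempty.mpr zero_le_one) hq.continuousOn
  have hz₀ne : z₀ ≠ 0 := ne_zero_of_mem_unit_sphere ⟨z₀, hz₀⟩
  refine ⟨q z₀, hpos z₀ hz₀ne, fun z => ?_⟩
  rcases eq_or_ne z 0 with rfl | hz
  · simp [hzero]
  have hunit : ‖z‖⁻¹ • z ∈ Metric.sphere (0 : E) 1 := by
    simpa using norm_smul_inv_norm (𝕜 := ℝ) hz
  calc q z₀ * ‖z‖ ^ 2 ≤ q (‖z‖⁻¹ • z) * ‖z‖ ^ 2 := by gcongr; exact hmin hunit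
    _ = q z := by
      rw [hsmul, mul_comm, ← mul_assoc, ← mul_pow, mul_inv_cancel₀ (norm_ne_zero_iff.mpr hz),
        one_pow, one_mul]

lemma integrable_exp_neg_dotProduct_mulVec {ι : Type*} [Fintype ι] {M : Matrix ι ι ℝ}
    (hM : M.PosDef) : Integrable fun z : ι → ℝ => Real.exp (-(1 / 2) * (z ⬝ᵥ M *ᵥ z)) := by
  -- Coercivity in the Euclidean norm, so that the bound factors over the coordinates.
  obtain ⟨c, hc, hcoercive⟩ := exists_pos_mul_norm_sq_le_of_homogeneous
    (q := fun y : EuclideanSpace ℝ ι => y.ofLp ⬝ᵥ M *ᵥ y.ofLp) (by fun_prop)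
    (fun t z => by simp only [WithLp.ofLp_smul, mulVec_smul, dotProduct_smul, smul_dotProduct,
      smul_eq_mul]; ring)
    (fun z hz => hM.dotProduct_mulVec_pos (by simpa using hz))
  have hprod : Integrable fun z : ι → ℝ => ∏ i, Real.exp (-(c / 2) * z i ^ 2) :=
    Integrable.fintype_prod (f := fun _ t => Real.exp (-(c / 2) * t ^ 2))
      fun _ => integrable_exp_neg_mul_sq (half_pos hc)
  refine hprod.mono (by fun_prop) (Filter.Eventually.of_forall fun z => ?_)
  have hbound := hcoercive (WithLp.toLp 2 z)
  rw [EuclideanSpace.real_norm_sq_eq] at hbound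
  simp only [Real.norm_eq_abs, abs_of_nonneg (Real.exp_pos _).le, ← Real.exp_sum,
    Real.exp_le_exp, ← Finset.mul_sum]
  linarith

lemma integrable_gaussD {ι : Type} [Fintype ι] [DecidableEq ι] {S : Matrix ι ι ℝ}
    (hS : S.PosDef) (m : ι → ℝ) : Integrable (gaussD S m) :=
  ((integrable_exp_neg_dotProduct_mulVec hS.inv).comp_sub_right m).const_mul _

section Gaussian

variable {m n : Type} [Fintype m] [Fintype n] [DecidableEq m] [DecidableEq n]

lemma dotProduct_inv_mulVec_add_eq_complete_square {Sx : Matrix m m ℝ} {Sz : Matrix n n ℝ}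
    (hSx : Sx.PosDef) (hSz : Sz.PosDef) (A : Matrix m n ℝ) (y : m → ℝ) (z : n → ℝ) :
    (y - A *ᵥ z) ⬝ᵥ Sx⁻¹ *ᵥ (y - A *ᵥ z) + z ⬝ᵥ Sz⁻¹ *ᵥ z
      = y ⬝ᵥ (Sx + A * Sz * Aᵀ)⁻¹ *ᵥ y
        + (z - (Sz⁻¹ + Aᵀ * Sx⁻¹ * A)⁻¹ *ᵥ Aᵀ *ᵥ Sx⁻¹ *ᵥ y)
          ⬝ᵥ (Sz⁻¹ + Aᵀ * Sx⁻¹ * A) *ᵥ (z - (Sz⁻¹ + Aᵀ * Sx⁻¹ * A)⁻¹ *ᵥ Aᵀ *ᵥ Sx⁻¹ *ᵥ y) := by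
  have hP := hSz.inv_add_transpose_mul_inv_mul hSx.posSemidef A
  rw [sub_mulVec_dotProduct_mulVec_sub hSx.isSymm.inv,
    sub_inv_mulVec_dotProduct_mulVec_sub hP.isSymm hP.det_pos.ne'.isUnit,
    dotProduct_inv_add_mul_mul_transpose_mulVec hSx.isSymm hSx.isUnit hSz.isUnit A hP.isUnit,
    add_mulVec, dotProduct_add]
  ring

lemma gaussD_affine_mul_gaussD {Sx : Matrix m m ℝ} {Sz : Matrix n n ℝ}
    (hSx : Sx.PosDef) (hSz : Sz.PosDef) (A : Matrix m n ℝ) (b x : m → ℝ) (z : n → ℝ) :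
    gaussD Sx (A *ᵥ z + b) x * gaussD Sz 0 z
      = gaussD (Sx + A * Sz * Aᵀ) b x *
        gaussD (Sz⁻¹ + Aᵀ * Sx⁻¹ * A)⁻¹ ((Sz⁻¹ + Aᵀ * Sx⁻¹ * A)⁻¹ *ᵥ Aᵀ *ᵥ Sx⁻¹ *ᵥ (x - b)) z := by
  have hP := hSz.inv_add_transpose_mul_inv_mul hSx.posSemidef A
  have hC := hSx.add_mul_mul_transpose hSz.posSemidef A
  unfold gaussD
  rw [mul_mul_mul_comm, ← Real.exp_add, mul_mul_mul_comm, ← Real.exp_add]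
  congr 1
  · rw [← mul_inv, ← mul_inv, ← Real.sqrt_mul (by positivity [hSx.det_pos]),
      ← Real.sqrt_mul (by positivity [hC.det_pos]), det_add_mul_mul_transpose hSx.det_pos.ne'.isUnit
        hSz.det_pos.ne'.isUnit, det_nonsing_inv, Ring.inverse_eq_inv']
    have := hP.det_pos.ne'
    field_simp
  · rw [show x - (A *ᵥ z + b) = (x - b) - A *ᵥ z by abel, sub_zero,
      nonsing_inv_nonsing_inv _ hP.det_pos.ne'.isUnit]
    congr 1
    linear_combination (-(1 : ℝ) / 2) *
      dotProduct_inv_mulVec_add_eq_complete_square hSx hSz A (x - b) z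

end Gaussian

/-- The marginal density of a piecewise affine Gaussian generative model is a sum over the
regions of Gaussian densities times truncated Gaussian masses. -/
theorem marginal_density_piecewise_affine {S D : ℕ} {ι : Type} [Fintype ι]
    (region : ι → Set (Fin S → ℝ))
    (hdisj : Pairwise (Function.onFun Disjoint region))
    (hcover : (⋃ ω, region ω) = Set.univ)
    (hmeas : ∀ ω, MeasurableSet (region ω))
    (A : ι → Matrix (Fin D) (Fin S) ℝ) (b : ι → Fin D → ℝ)
    (Sx : Matrix (Fin D) (Fin D) ℝ) (hSx : Sx.PosDef)
    (Sz : Matrix (Fin S) (Fin S) ℝ) (hSz : Sz.PosDef)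
    (g : (Fin S → ℝ) → Fin D → ℝ)
    (hg : ∀ ω z, z ∈ region ω → g z = A ω *ᵥ z + b ω)
    (x : Fin D → ℝ) :
    (∫ z, gaussD Sx (g z) x * gaussD Sz 0 z) =
      ∑ ω, gaussD (Sx + A ω * Sz * (A ω)ᵀ) (b ω) x *
        ∫ z in region ω,
          gaussD ((Sz⁻¹ + (A ω)ᵀ * Sx⁻¹ * A ω)⁻¹)
            ((Sz⁻¹ + (A ω)ᵀ * Sx⁻¹ * A ω)⁻¹ *ᵥ ((A ω)ᵀ *ᵥ (Sx⁻¹ *ᵥ (x - b ω)))) z := by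
  have hpiece : ∀ ω, ∀ z ∈ region ω, gaussD Sx (g z) x * gaussD Sz 0 z
      = gaussD (Sx + A ω * Sz * (A ω)ᵀ) (b ω) x *
          gaussD ((Sz⁻¹ + (A ω)ᵀ * Sx⁻¹ * A ω)⁻¹)
            ((Sz⁻¹ + (A ω)ᵀ * Sx⁻¹ * A ω)⁻¹ *ᵥ ((A ω)ᵀ *ᵥ (Sx⁻¹ *ᵥ (x - b ω)))) z :=
    fun ω z hz => by rw [hg ω z hz, gaussD_affine_mul_gaussD hSx hSz]
  have hintegrable : ∀ ω, IntegrableOn (fun z => gaussD Sx (g z) x * gaussD Sz 0 z) (region ω) :=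
    fun ω => ((integrable_gaussD ((hSz.inv_add_transpose_mul_inv_mul hSx.posSemidef (A ω)).inv)
      _).const_mul _).integrableOn.congr_fun (fun z hz => (hpiece ω z hz).symm) (hmeas ω)
  rw [← setIntegral_univ, ← hcover, integral_iUnion_fintype hmeas hdisj hintegrable]
  refine Finset.sum_congr rfl fun ω _ => ?_
  rw [← integral_const_mul]
  exact setIntegral_congr_fun (hmeas ω) (hpiece ω)
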